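/- arXiv:2503.03741 — 3 statements merged into one kernel-verified Lean document; each statement's English description precedes it below -/
import Mathlib

section
/- Let M be a finite monoid with zero. Every principal factor of M is either null (its square is zero) or 0-simple. -/
/-!
If `P(a)` is not null, some `s, t ∈ J(a)` have `st ∉ I(a) ∪ {0}`, hence `a ∈ J(st)`. Unfolding
`a = c s t d` with `s, t ∈ MaM` gives `a = e a f a g`, and substituting this equation into
itself yields `a = α a β` with `α, β ∈ J(a)`. Then any `x ∈ J(a) \ I(a)` generates every
element of `J(a)` with multipliers taken from `J(a)`, so an ideal of `P(a)` containing such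
an `x` is all of `P(a)`.
-/

/-- `Jset a = M a M`, the principal two-sided ideal generated by `a`. -/
def Jset {M : Type*} [Monoid M] (a : M) : Set M := {z | ∃ u v : M, z = u * a * v}

/-- `Iset a`: the elements of `J(a)` generating a strictly smaller two-sided ideal. -/
def Iset {M : Type*} [Monoid M] (a : M) : Set M := {x ∈ Jset a | a ∉ Jset x}

section

variable {M : Type*} [Monoid M] {a x : M}

theorem mul_mem_Jset_left (g : M) (hx : x ∈ Jset a) : g * x ∈ Jset a := by
  obtain ⟨u, v, rfl⟩ := hx
  exact ⟨g * u, v, by simp only [mul_assoc]⟩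

theorem mul_mem_Jset_right (h : M) (hx : x ∈ Jset a) : x * h ∈ Jset a := by
  obtain ⟨u, v, rfl⟩ := hx
  exact ⟨u, v * h, by simp only [mul_assoc]⟩

theorem mem_Jset_of_notMem_Iset (hx : x ∈ Jset a) (hxI : x ∉ Iset a) : a ∈ Jset x := by
  by_contra haJ
  exact hxI ⟨hx, haJ⟩

theorem exists_mem_Jset_eq_mul_self_mul {s t : M} (hs : s ∈ Jset a) (ht : t ∈ Jset a)
    (ha : a ∈ Jset (s * t)) : ∃ α ∈ Jset a, ∃ β ∈ Jset a, a = α * a * β := by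
  obtain ⟨p, q, rfl⟩ := hs
  obtain ⟨r, w, rfl⟩ := ht
  obtain ⟨c, d, hcd⟩ := ha
  set e := c * p
  set f := q * r
  set g := w * d
  have hefg : a = e * a * f * a * g := hcd.trans (by simp only [e, f, g, mul_assoc])
  refine ⟨e * a * f * e, ⟨e, f * e, by simp only [mul_assoc]⟩, f * a * (g * g), ⟨f, g * g, rfl⟩, ?_⟩
  calc a = e * a * f * a * g := hefg
    _ = e * a * f * (e * a * f * a * g) * g := congrArg (fun y => e * a * f * y * g) hefg
    _ = e * a * f * e * a * (f * a * (g * g)) := by simp only [mul_assoc]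

theorem exists_mem_Jset_eq_mul_mul_of_mem_Jset {α β z : M} (hα : α ∈ Jset a) (hβ : β ∈ Jset a)
    (ha : a = α * a * β) (hx : a ∈ Jset x) (hz : z ∈ Jset a) :
    ∃ g ∈ Jset a, ∃ h ∈ Jset a, z = g * x * h := by
  obtain ⟨u, v, hux⟩ := hx
  obtain ⟨g, h, rfl⟩ := hz
  refine ⟨g * α * u, mul_mem_Jset_right u (mul_mem_Jset_left g hα),
    v * β * h, mul_mem_Jset_right h (mul_mem_Jset_left v hβ), ?_⟩
  calc g * a * h = g * (α * a * β) * h := by rw [← ha]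
    _ = g * α * u * x * (v * β * h) := by rw [hux]; simp only [mul_assoc]

end

theorem principal_factor_null_or_zero_simple_general {M : Type*} [MonoidWithZero M]
    (a : M) :
    (∀ s ∈ Jset a, ∀ t ∈ Jset a, s * t ∈ insert (0 : M) (Iset a)) ∨
    ((∃ s ∈ Jset a, ∃ t ∈ Jset a, s * t ∉ insert (0 : M) (Iset a)) ∧
      ∀ T : Set M, insert (0 : M) (Iset a) ⊆ T → T ⊆ Jset a →
        (∀ s ∈ Jset a, ∀ t ∈ T, s * t ∈ T) →
        (∀ s ∈ T, ∀ t ∈ Jset a, s * t ∈ T) →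
        T = insert (0 : M) (Iset a) ∨ T = Jset a) := by
  refine or_iff_not_imp_left.mpr fun hnull => ?_
  push Not at hnull
  obtain ⟨s, hs, t, ht, hst⟩ := hnull
  refine ⟨⟨s, hs, t, ht, hst⟩, fun T hIT hTJ hL hR => ?_⟩
  have hst' : a ∈ Jset (s * t) :=
    mem_Jset_of_notMem_Iset (mul_mem_Jset_right t hs) fun h => hst (Or.inr h)
  obtain ⟨α, hα, β, hβ, ha⟩ := exists_mem_Jset_eq_mul_self_mul hs ht hst'
  by_cases hT : T ⊆ insert 0 (Iset a)
  · exact Or.inl (hT.antisymm hIT)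
  obtain ⟨x, hxT, hx⟩ := Set.not_subset.mp hT
  have hax : a ∈ Jset x := mem_Jset_of_notMem_Iset (hTJ hxT) fun h => hx (Or.inr h)
  refine Or.inr (hTJ.antisymm fun z hz => ?_)
  obtain ⟨g, hg, h, hh, rfl⟩ := exists_mem_Jset_eq_mul_mul_of_mem_Jset hα hβ ha hax hz
  exact hR _ (hL g hg x hxT) h hh

/-- Every principal factor `P(a) = J(a)/I(a)` of a finite monoid with zero is
either null (its square is zero in the Rees quotient) or 0-simple (its square is
nonzero and its only ideals are zero and everything).  Here the zero class of the
Rees quotient is `insert 0 (Iset a)`, and ideals of `P(a)` correspond to sets `T`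
with `insert 0 (Iset a) ⊆ T ⊆ Jset a` closed under left and right multiplication
by elements of `Jset a`. -/
theorem principal_factor_null_or_zero_simple {M : Type*} [MonoidWithZero M] [Finite M]
    (a : M) :
    (∀ s ∈ Jset a, ∀ t ∈ Jset a, s * t ∈ insert (0 : M) (Iset a)) ∨
    ((∃ s ∈ Jset a, ∃ t ∈ Jset a, s * t ∉ insert (0 : M) (Iset a)) ∧
      ∀ T : Set M, insert (0 : M) (Iset a) ⊆ T → T ⊆ Jset a →
        (∀ s ∈ Jset a, ∀ t ∈ T, s * t ∈ T) →
        (∀ s ∈ T, ∀ t ∈ Jset a, s * t ∈ T) →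
        T = insert (0 : M) (Iset a) ∨ T = Jset a) :=
  principal_factor_null_or_zero_simple_general a
end

section
/- If I is a nonzero ideal of a finite monoid M with zero such that I contains no nonzero idempotent, then I^{2^k} = {0} for some positive integer k. -/
open Pointwise

/-- If `I` is a nonzero ideal of a finite monoid with zero containing no nonzero
idempotent, then `I ^ (2 ^ k) = {0}` for some positive integer `k`. -/
theorem ideal_no_idempotent_nilpotent {M : Type*} [MonoidWithZero M] [Finite M]
    (I : Set M)
    (hI : ∀ m : M, ∀ x ∈ I, m * x ∈ I ∧ x * m ∈ I)
    (hne : ∃ x ∈ I, x ≠ 0)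
    (hid : ∀ e ∈ I, e * e = e → e = 0) :
    ∃ k : ℕ, 0 < k ∧ I ^ (2 ^ k) = {(0 : M)} := by
  classical
  obtain ⟨x0, hx0I, -⟩ := hne
  have h0I : (0 : M) ∈ I := by
    have := (hI 0 x0 hx0I).1
    simpa using this
  have hmul : ∀ a b : M, a ∈ I → b ∈ I → a * b ∈ I := fun a b _ hb => (hI a b hb).1
  -- powers of elements of I stay in I
  have hpowmem : ∀ x : M, x ∈ I → ∀ n : ℕ, 1 ≤ n → x ^ n ∈ I := by
    intro x hx n
    induction n with
    | zero => intro h; omega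
    | succ k ih =>
      intro _
      rcases Nat.eq_zero_or_pos k with hk | hk
      · subst hk; simpa using hx
      · rw [pow_succ]; exact hmul _ _ (ih hk) hx
  -- every element of I is nilpotent
  have hnil : ∀ x ∈ I, ∃ N : ℕ, 1 ≤ N ∧ x ^ N = 0 := by
    intro x hx
    obtain ⟨a, b, hab, heq⟩ := Finite.exists_ne_map_eq_of_infinite (fun n : ℕ => x ^ n)
    -- wlog a < b
    obtain ⟨m, n, hmn, heq⟩ : ∃ m n : ℕ, m < n ∧ x ^ m = x ^ n := by
      rcases lt_or_gt_of_ne hab with h | h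
      · exact ⟨a, b, h, heq⟩
      · exact ⟨b, a, h, heq.symm⟩
    set d := n - m with hd
    have hd1 : 1 ≤ d := by omega
    have hstep : ∀ k : ℕ, m ≤ k → x ^ (k + d) = x ^ k := by
      intro k hk
      have h1 : k + d = (k - m) + n := by omega
      have h2 : (k - m) + m = k := by omega
      rw [h1, pow_add, ← heq, ← pow_add, h2]
    have hiter : ∀ j k : ℕ, m ≤ k → x ^ (k + j * d) = x ^ k := by
      intro j
      induction j with
      | zero => intro k hk; simp
      | succ e ih =>
        intro k hk
        have h1 : k + (e + 1) * d = (k + e * d) + d := by ring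
        rw [h1, hstep (k + e * d) (by omega), ih k hk]
    set N := (m + 1) * d with hN
    have hN1 : 1 ≤ N := by
      have : 1 ≤ m + 1 := by omega
      calc 1 = 1 * 1 := by ring
        _ ≤ (m + 1) * d := Nat.mul_le_mul this hd1
    have hNm : m ≤ N := by
      calc m ≤ (m + 1) * 1 := by omega
        _ ≤ (m + 1) * d := Nat.mul_le_mul_left _ hd1
    have hidem : x ^ N * x ^ N = x ^ N := by
      rw [← pow_add]
      have : N + N = N + (m + 1) * d := by rw [hN]
      rw [this, hiter (m + 1) N hNm]
    have hxNI : x ^ N ∈ I := hpowmem x hx N hN1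
    exact ⟨N, hN1, hid _ hxNI hidem⟩
  -- powers of I (as a set) are contained in I
  have hII : I * I ⊆ I := by
    rw [Set.mul_subset_iff]
    intro a ha b hb
    exact hmul a b ha hb
  have hIpow : ∀ k : ℕ, 1 ≤ k → I ^ k ⊆ I := by
    intro k
    induction k with
    | zero => intro h; omega
    | succ e ih =>
      intro _
      rcases Nat.eq_zero_or_pos e with he | he
      · subst he; rw [pow_one]
      · rw [pow_succ]
        exact (Set.mul_subset_mul_right (ih he)).trans hII
  have hmono : ∀ a b : ℕ, 1 ≤ a → 1 ≤ b → I ^ (a + b) ⊆ I ^ a := by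
    intro a b ha hb
    have h1 : a + b = (a - 1) + (1 + b) := by omega
    have h2 : a = (a - 1) + 1 := by omega
    rw [h1, pow_add]
    calc I ^ (a - 1) * I ^ (1 + b) ⊆ I ^ (a - 1) * I :=
          Set.mul_subset_mul_left (hIpow (1 + b) (by omega))
      _ = I ^ a := by rw [← pow_succ, ← h2]
  have hstep2 : ∀ a b : ℕ, a ≤ b → I ^ (2 ^ b) ⊆ I ^ (2 ^ a) := by
    intro a b hab
    rcases eq_or_lt_of_le hab with rfl | h
    · exact subset_rfl
    · have h1 : 2 ^ a < 2 ^ b := Nat.pow_lt_pow_right one_lt_two h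
      have h2 : 2 ^ b = 2 ^ a + (2 ^ b - 2 ^ a) := by omega
      rw [h2]
      exact hmono _ _ (Nat.one_le_two_pow) (by omega)
  -- stabilize the chain I^(2^n)
  obtain ⟨a, b, hab, hJ⟩ := Finite.exists_ne_map_eq_of_infinite (fun n : ℕ => I ^ (2 ^ n))
  obtain ⟨i, j, hij, hJ⟩ : ∃ i j : ℕ, i < j ∧ I ^ (2 ^ i) = I ^ (2 ^ j) := by
    rcases lt_or_gt_of_ne hab with h | h
    · exact ⟨a, b, h, hJ⟩
    · exact ⟨b, a, h, hJ.symm⟩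
  set T : Set M := I ^ (2 ^ i) with hT
  have hJstab : I ^ (2 ^ (i + 1)) = T := by
    apply Set.Subset.antisymm
    · exact hstep2 i (i + 1) (by omega)
    · rw [hJ]
      exact hstep2 (i + 1) j (by omega)
  have h2i1 : 2 ^ (i + 1) = 2 ^ i + 2 ^ i := by rw [pow_succ]; omega
  have hTT : T * T = T := by
    rw [hT, ← pow_add, ← h2i1, ← hT]
    exact hJstab
  have hT0 : (0 : M) ∈ T := by
    have h1 : (0 : M) ^ (2 ^ i) ∈ I ^ (2 ^ i) := Set.pow_mem_pow h0I
    rwa [zero_pow (by positivity : (2:ℕ) ^ i ≠ 0)] at h1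
  have hTsubI : T ⊆ I := hIpow _ Nat.one_le_two_pow
  have hTclosed : ∀ s t : M, s ∈ T → t ∈ T → s * t ∈ T := by
    intro s t hs ht
    rw [← hTT]
    exact Set.mul_mem_mul hs ht
  -- factorization functions
  have hfac : ∀ s : M, ∃ p q : M, s ∈ T → p ∈ T ∧ q ∈ T ∧ s = p * q := by
    intro s
    by_cases hs : s ∈ T
    · have hs2 : s ∈ T * T := hTT.symm ▸ hs
      obtain ⟨p, hp, q, hq, hpq⟩ := hs2
      exact ⟨p, q, fun _ => ⟨hp, hq, hpq.symm⟩⟩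
    · exact ⟨1, 1, fun h => absurd h hs⟩
  choose L R hLR using hfac
  -- main claim: T ⊆ {0}
  have hTzero : ∀ t ∈ T, t = 0 := by
    intro t ht
    let u : ℕ → M := fun n => Nat.rec t (fun _ s => L s) n
    have hus : ∀ n, u (n + 1) = L (u n) := fun n => rfl
    have huT : ∀ n, u n ∈ T := by
      intro n
      induction n with
      | zero => exact ht
      | succ k ih => rw [hus]; exact (hLR (u k) ih).1
    have husplit : ∀ n, u n = u (n + 1) * R (u n) := by
      intro n
      have h1 := (hLR (u n) (huT n)).2.2
      rw [hus]; exact h1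
    have hkey1 : ∀ n, ∃ v : M, t = u n * v := by
      intro n
      induction n with
      | zero => exact ⟨1, (mul_one t).symm⟩
      | succ k ih =>
        obtain ⟨v, hv⟩ := ih
        refine ⟨R (u k) * v, ?_⟩
        rw [← mul_assoc, ← husplit k]
        exact hv
    have hkey2 : ∀ p d : ℕ, 1 ≤ d → ∃ w ∈ T, u p = u (p + d) * w := by
      intro p d
      induction d with
      | zero => intro h; omega
      | succ e ih =>
        intro _
        rcases Nat.eq_zero_or_pos e with he | he
        · subst he
          exact ⟨R (u p), (hLR (u p) (huT p)).2.1, husplit p⟩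
        · obtain ⟨w, hwT, hw⟩ := ih he
          refine ⟨R (u (p + e)) * w, hTclosed _ _ (hLR _ (huT _)).2.1 hwT, ?_⟩
          have h1 : p + (e + 1) = (p + e) + 1 := by omega
          rw [h1, ← mul_assoc, ← husplit (p + e)]
          exact hw
    obtain ⟨c, e, hce, hu⟩ := Finite.exists_ne_map_eq_of_infinite u
    obtain ⟨c, e, hce, hu⟩ : ∃ c e : ℕ, c < e ∧ u c = u e := by
      rcases lt_or_gt_of_ne hce with h | h
      · exact ⟨c, e, h, hu⟩
      · exact ⟨e, c, h, hu.symm⟩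
    obtain ⟨w, hwT, hw⟩ := hkey2 c (e - c) (by omega)
    have hceq : c + (e - c) = e := by omega
    rw [hceq, ← hu] at hw
    -- hw : u c = u c * w
    have hfix : ∀ k : ℕ, u c * w ^ k = u c := by
      intro k
      induction k with
      | zero => simp
      | succ m ih => rw [pow_succ, ← mul_assoc, ih, ← hw]
    obtain ⟨N, hN1, hNz⟩ := hnil w (hTsubI hwT)
    have huc0 : u c = 0 := by
      have := hfix N
      rw [hNz, mul_zero] at this
      exact this.symm
    obtain ⟨v, hv⟩ := hkey1 c
    rw [hv, huc0, zero_mul]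
  refine ⟨i + 1, by omega, ?_⟩
  rw [hJstab]
  apply Set.Subset.antisymm
  · intro t ht
    exact hTzero t ht
  · intro t ht
    rw [Set.mem_singleton_iff] at ht
    subst ht
    exact hT0
end

section
/- Let e be a nonzero idempotent in a monoid M with zero, J its 𝒥-class, and P(e) = J(e)/I(e) the principal factor. Then e M e ∩ J is a group under the multiplication of M with identity element e. -/
/-!
The corner `e M e` is a monoid with identity `e`. If `x ∈ e M e` and `M x M = M e M`, then
`e = u x v`, hence `e = (e u e) x (e v e)` is a two-sided product in `e M e`; a finite monoid is
Dedekind-finite, so `x` is a unit of `e M e`. Conversely a unit `x` of `e M e` has `x y = e`,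
so `M x M = M e M`. Hence `e M e ∩ 𝒥_e` is exactly the unit group of `e M e`.
-/

namespace IsIdempotentElem

variable {S : Type*} [Semigroup S] {e : S}

instance (idem : IsIdempotentElem e) : Monoid idem.Corner where
  __ : Semigroup idem.Corner := inferInstanceAs <| Semigroup (Subsemigroup.corner e)
  one := ⟨e, e, by simp_rw [idem.eq]⟩
  one_mul r := Subtype.ext ((Subsemigroup.mem_corner_iff idem).mp r.2).1
  mul_one r := Subtype.ext ((Subsemigroup.mem_corner_iff idem).mp r.2).2

instance [Finite S] (idem : IsIdempotentElem e) : Finite idem.Corner :=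
  inferInstanceAs <| Finite (Subsemigroup.corner e)

end IsIdempotentElem

section Jset

variable {M : Type*} [Monoid M]

theorem Jset_subset_Jset {a b : M} (h : a ∈ Jset b) : Jset a ⊆ Jset b := by
  obtain ⟨s, t, rfl⟩ := h
  rintro z ⟨u, v, rfl⟩
  exact ⟨u * s, t * v, by simp only [mul_assoc]⟩

theorem Jset_eq_Jset_of_mem {a b : M} (ha : a ∈ Jset b) (hb : b ∈ Jset a) : Jset a = Jset b :=
  (Jset_subset_Jset ha).antisymm (Jset_subset_Jset hb)

theorem mem_Jset_self (a : M) : a ∈ Jset a := ⟨1, 1, by simp⟩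

variable {e : M} (idem : IsIdempotentElem e)
include idem

theorem IsIdempotentElem.isUnit_of_mem_Jset [Finite M] {x : idem.Corner}
    (h : e ∈ Jset x.1) : IsUnit x := by
  obtain ⟨u, v, huv⟩ := h
  obtain ⟨hex, hxe⟩ := (Subsemigroup.mem_corner_iff idem).mp x.2
  let a : idem.Corner := ⟨e * u * e, u, rfl⟩
  let b : idem.Corner := ⟨e * v * e, v, rfl⟩
  have haxb : a * x * b = 1 := Subtype.ext <|
    calc e * u * e * x.1 * (e * v * e)
        = e * u * (e * x.1) * e * v * e := by simp only [mul_assoc]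
      _ = e * (u * (x.1 * e) * v) * e := by rw [hex]; simp only [mul_assoc]
      _ = e := by rw [hxe, ← huv, idem.eq, idem.eq]
  have hunit : IsUnit (a * x * b) := haxb ▸ isUnit_one
  exact isUnit_of_mul_isUnit_right (isUnit_of_mul_isUnit_left hunit)

theorem IsIdempotentElem.Jset_eq_of_isUnit {x : idem.Corner} (hx : IsUnit x) :
    Jset x.1 = Jset e := by
  obtain ⟨hex, -⟩ := (Subsemigroup.mem_corner_iff idem).mp x.2
  obtain ⟨y, hxy⟩ := hx.exists_right_inv
  exact Jset_eq_Jset_of_mem ⟨1, x.1, by rw [one_mul, hex]⟩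
    ⟨1, y.1, by rw [one_mul]; exact (congrArg Subtype.val hxy).symm⟩

theorem IsIdempotentElem.setOf_corner_Jset_eq_range_units [Finite M] :
    {x : M | (∃ m : M, x = e * m * e) ∧ Jset x = Jset e} =
      Set.range (fun u : idem.Cornerˣ => u.1.1) := by
  ext x
  constructor
  · rintro ⟨⟨m, rfl⟩, hJ⟩
    have hunit := idem.isUnit_of_mem_Jset (x := ⟨_, m, rfl⟩) (hJ ▸ mem_Jset_self e)
    exact ⟨hunit.unit, rfl⟩
  · rintro ⟨u, rfl⟩
    obtain ⟨m, hm⟩ := (u : idem.Corner).2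
    exact ⟨⟨m, hm.symm⟩, idem.Jset_eq_of_isUnit u.isUnit⟩

end Jset

theorem maximal_subgroup_is_group_general {M : Type*} [MonoidWithZero M] [Finite M]
    (e : M) (he : e * e = e) :
    e ∈ {x : M | (∃ m : M, x = e * m * e) ∧ Jset x = Jset e} ∧
    (∀ x ∈ {x : M | (∃ m : M, x = e * m * e) ∧ Jset x = Jset e},
      ∀ y ∈ {x : M | (∃ m : M, x = e * m * e) ∧ Jset x = Jset e},
        x * y ∈ {x : M | (∃ m : M, x = e * m * e) ∧ Jset x = Jset e}) ∧
    (∀ x ∈ {x : M | (∃ m : M, x = e * m * e) ∧ Jset x = Jset e},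
      x * e = x ∧ e * x = x) ∧
    (∀ x ∈ {x : M | (∃ m : M, x = e * m * e) ∧ Jset x = Jset e},
      ∃ y ∈ {x : M | (∃ m : M, x = e * m * e) ∧ Jset x = Jset e},
        x * y = e ∧ y * x = e) := by
  have idem : IsIdempotentElem e := he
  rw [idem.setOf_corner_Jset_eq_range_units]
  refine ⟨⟨1, rfl⟩, ?_, ?_, ?_⟩
  · rintro _ ⟨u, rfl⟩ _ ⟨v, rfl⟩
    exact ⟨u * v, rfl⟩
  · rintro _ ⟨u, rfl⟩
    exact ((Subsemigroup.mem_corner_iff idem).mp (u : idem.Corner).2).symm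
  · rintro _ ⟨u, rfl⟩
    exact ⟨_, ⟨u⁻¹, rfl⟩, congrArg Subtype.val u.mul_inv, congrArg Subtype.val u.inv_mul⟩

/-- For a nonzero idempotent `e` of a finite monoid with zero, the set
`e M e ∩ 𝒥_e` is a group under the multiplication of `M` with identity `e`. -/
theorem maximal_subgroup_is_group {M : Type*} [MonoidWithZero M] [Finite M]
    (e : M) (he : e * e = e) (hne : e ≠ 0) :
    e ∈ {x : M | (∃ m : M, x = e * m * e) ∧ Jset x = Jset e} ∧
    (∀ x ∈ {x : M | (∃ m : M, x = e * m * e) ∧ Jset x = Jset e},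
      ∀ y ∈ {x : M | (∃ m : M, x = e * m * e) ∧ Jset x = Jset e},
        x * y ∈ {x : M | (∃ m : M, x = e * m * e) ∧ Jset x = Jset e}) ∧
    (∀ x ∈ {x : M | (∃ m : M, x = e * m * e) ∧ Jset x = Jset e},
      x * e = x ∧ e * x = x) ∧
    (∀ x ∈ {x : M | (∃ m : M, x = e * m * e) ∧ Jset x = Jset e},
      ∃ y ∈ {x : M | (∃ m : M, x = e * m * e) ∧ Jset x = Jset e},
        x * y = e ∧ y * x = e) :=
  maximal_subgroup_is_group_general e he
end
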